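/- arXiv:2308.02736 — 2 statements merged into one kernel-verified Lean document; each statement's English description precedes it below -/
import Mathlib

section
/- Let 0 ≤ α < n and let b be any locally integrable function on ℚ_p^n. Then for every x with M_α^p(f)(x) < ∞, one has |[b, M_α^p](f)(x)| ≤ M_{α,b}^p(f)(x) + 2 b^−(x) M_α^p(f)(x), where b^−(x) = max(−b(x), 0). -/
open MeasureTheory ENNReal

/-- The closed `p`-adic ball in `ℚ_p^n` of radius `p^γ` centered at `x`. -/
noncomputable def pBall (p : ℕ) [Fact p.Prime] (n : ℕ) (γ : ℤ) (x : Fin n → ℚ_[p]) :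
    Set (Fin n → ℚ_[p]) := Metric.closedBall x ((p : ℝ) ^ γ)

/-- The `p`-adic fractional maximal function
`M_α^p(f)(x) = sup_γ |B_γ(x)|^{α/n−1} ∫_{B_γ(x)} |f|`. -/
noncomputable def fracMax (p : ℕ) [Fact p.Prime] (n : ℕ)
    [MeasurableSpace (Fin n → ℚ_[p])] (μ : Measure (Fin n → ℚ_[p])) (α : ℝ)
    (f : (Fin n → ℚ_[p]) → ℝ) (x : Fin n → ℚ_[p]) : ENNReal :=
  ⨆ γ : ℤ, μ (pBall p n γ x) ^ (α / n - 1) *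
    ∫⁻ y in pBall p n γ x, ENNReal.ofReal |f y| ∂μ

/-- The maximal commutator
`M_{α,b}^p(f)(x) = sup_γ |B_γ(x)|^{α/n−1} ∫_{B_γ(x)} |b(x)−b(y)||f(y)| dy`. -/
noncomputable def maxComm (p : ℕ) [Fact p.Prime] (n : ℕ)
    [MeasurableSpace (Fin n → ℚ_[p])] (μ : Measure (Fin n → ℚ_[p])) (α : ℝ)
    (b f : (Fin n → ℚ_[p]) → ℝ) (x : Fin n → ℚ_[p]) : ENNReal :=
  ⨆ γ : ℤ, μ (pBall p n γ x) ^ (α / n - 1) *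
    ∫⁻ y in pBall p n γ x, ENNReal.ofReal (|b x - b y| * |f y|) ∂μ

/-- The nonlinear commutator `[b, M_α^p](f) = b · M_α^p(f) − M_α^p(b f)` (as a real
number, via `ENNReal.toReal`). -/
noncomputable def nonlinComm (p : ℕ) [Fact p.Prime] (n : ℕ)
    [MeasurableSpace (Fin n → ℚ_[p])] (μ : Measure (Fin n → ℚ_[p])) (α : ℝ)
    (b f : (Fin n → ℚ_[p]) → ℝ) (x : Fin n → ℚ_[p]) : ℝ :=
  b x * (fracMax p n μ α f x).toReal -
    (fracMax p n μ α (fun y => b y * f y) x).toReal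

/-- The local fractional maximal function relative to the ball `B = B_{γ₀}(x₀)`:
`M_{α,B}^p(b)(y) = sup_{B_γ(y) ⊆ B} |B_γ(y)|^{α/n−1} ∫_{B_γ(y)} |b|`. -/
noncomputable def localFracMax (p : ℕ) [Fact p.Prime] (n : ℕ)
    [MeasurableSpace (Fin n → ℚ_[p])] (μ : Measure (Fin n → ℚ_[p])) (α : ℝ)
    (γ₀ : ℤ) (x₀ : Fin n → ℚ_[p]) (b : (Fin n → ℚ_[p]) → ℝ)
    (y : Fin n → ℚ_[p]) : ENNReal :=
  ⨆ (γ : ℤ) (_ : pBall p n γ y ⊆ pBall p n γ₀ x₀),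
    μ (pBall p n γ y) ^ (α / n - 1) *
      ∫⁻ z in pBall p n γ y, ENNReal.ofReal |b z| ∂μ

/-- The `p`-adic BMO seminorm `sup_B |B|^{−1} ∫_B |b − b_B|`. -/
noncomputable def bmoNorm (p : ℕ) [Fact p.Prime] (n : ℕ)
    [MeasurableSpace (Fin n → ℚ_[p])] (μ : Measure (Fin n → ℚ_[p]))
    (b : (Fin n → ℚ_[p]) → ℝ) : ENNReal :=
  ⨆ (γ : ℤ) (x : Fin n → ℚ_[p]), (μ (pBall p n γ x))⁻¹ *
    ∫⁻ y in pBall p n γ x, ENNReal.ofReal |b y - ⨍ z in pBall p n γ x, b z ∂μ| ∂μ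

/-! Integrating `|b x| ≤ |b y| + |b x - b y|` and `|b y| ≤ |b x| + |b x - b y|` against `|f|` over
each ball and taking suprema gives `|b x| M(f) ≤ M(bf) + M_b(f)` and `M(bf) ≤ |b x| M(f) + M_b(f)`,
i.e. `|[|b|, M](f)(x)| ≤ M_b(f)(x)`; writing `b = |b| - 2b⁻` accounts for the extra term. -/

section

variable {X : Type*} [MeasurableSpace X] {ν : Measure X} {b f : X → ℝ}

lemma ofReal_abs_mul_lintegral_le (hb : AEMeasurable b ν) (hf : AEMeasurable f ν) (t : ℝ) :
    ENNReal.ofReal |t| * ∫⁻ y, ENNReal.ofReal |f y| ∂ν ≤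
      ∫⁻ y, ENNReal.ofReal |b y * f y| ∂ν + ∫⁻ y, ENNReal.ofReal (|t - b y| * |f y|) ∂ν := by
  rw [← lintegral_const_mul' _ _ ofReal_ne_top,
    ← lintegral_add_left' (f := fun y => ENNReal.ofReal |b y * f y|)
      (hb.mul hf).abs.ennreal_ofReal]
  refine lintegral_mono fun y => ?_
  rw [← ofReal_mul (abs_nonneg t), ← ofReal_add (abs_nonneg _) (by positivity), abs_mul]
  gcongr
  calc |t| * |f y| ≤ (|b y| + |t - b y|) * |f y| := by
        gcongr; linarith [abs_sub_abs_le_abs_sub t (b y)]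
    _ = |b y| * |f y| + |t - b y| * |f y| := add_mul _ _ _

lemma lintegral_ofReal_abs_mul_le (hf : AEMeasurable f ν) (t : ℝ) :
    ∫⁻ y, ENNReal.ofReal |b y * f y| ∂ν ≤
      ENNReal.ofReal |t| * ∫⁻ y, ENNReal.ofReal |f y| ∂ν +
        ∫⁻ y, ENNReal.ofReal (|t - b y| * |f y|) ∂ν := by
  rw [← lintegral_const_mul' _ _ ofReal_ne_top]
  simp_rw [← ofReal_mul (abs_nonneg t)]
  rw [← lintegral_add_left' (hf.abs.const_mul |t|).ennreal_ofReal]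
  refine lintegral_mono fun y => ?_
  rw [← ofReal_add (by positivity) (by positivity), abs_mul]
  gcongr
  calc |b y| * |f y| ≤ (|t| + |t - b y|) * |f y| := by
        gcongr; linarith [abs_sub_abs_le_abs_sub (b y) t, abs_sub_comm (b y) t]
    _ = |t| * |f y| + |t - b y| * |f y| := add_mul _ _ _

end

lemma iSup_mul_le_iSup_mul_add {ι : Sort*} (w F G H : ι → ℝ≥0∞) (h : ∀ i, F i ≤ G i + H i) :
    ⨆ i, w i * F i ≤ (⨆ i, w i * G i) + ⨆ i, w i * H i :=
  iSup_le fun i => (mul_le_mul_right (h i) _).trans <| (mul_add _ _ _).trans_le <|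
    add_le_add (le_iSup (fun i => w i * G i) i) (le_iSup (fun i => w i * H i) i)

lemma abs_mul_sub_le_of_abs_mul_le {t a b c : ℝ} (ha : 0 ≤ a) (h₁ : |t| * a ≤ b + c)
    (h₂ : b ≤ |t| * a + c) : |t * a - b| ≤ c + 2 * max (-t) 0 * a := by
  rw [abs_le]
  rcases le_total 0 t with ht | ht
  · rw [abs_of_nonneg ht] at h₁ h₂
    rw [max_eq_right (by linarith)]
    constructor <;> linarith
  · rw [abs_of_nonpos ht] at h₁ h₂
    rw [max_eq_left (by linarith)]
    have := mul_nonpos_of_nonpos_of_nonneg ht ha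
    constructor <;> linarith

lemma ofReal_abs_mul_toReal_sub_le {t : ℝ} {A B C : ℝ≥0∞} (hA : A ≠ ⊤)
    (h₁ : ENNReal.ofReal |t| * A ≤ B + C) (h₂ : B ≤ ENNReal.ofReal |t| * A + C) :
    ENNReal.ofReal |t * A.toReal - B.toReal| ≤ C + ENNReal.ofReal (2 * max (-t) 0) * A := by
  rcases eq_or_ne C ⊤ with rfl | hC
  · simp
  have htA : ENNReal.ofReal |t| * A ≠ ⊤ := mul_ne_top ofReal_ne_top hA
  have hB : B ≠ ⊤ := ne_top_of_le_ne_top (add_ne_top.2 ⟨htA, hC⟩) h₂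
  apply ofReal_le_of_le_toReal
  rw [toReal_add hC (mul_ne_top ofReal_ne_top hA), toReal_mul, toReal_ofReal (by positivity)]
  refine abs_mul_sub_le_of_abs_mul_le toReal_nonneg ?_ ?_
  · simpa [toReal_add hB hC] using toReal_mono (add_ne_top.2 ⟨hB, hC⟩) h₁
  · simpa [toReal_add htA hC] using toReal_mono (add_ne_top.2 ⟨htA, hC⟩) h₂

section fracMax

variable {p : ℕ} [Fact p.Prime] {n : ℕ} [MeasurableSpace (Fin n → ℚ_[p])]
  {μ : Measure (Fin n → ℚ_[p])} {α : ℝ} {b f : (Fin n → ℚ_[p]) → ℝ}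

lemma mul_fracMax (c : ℝ≥0∞) (x : Fin n → ℚ_[p]) :
    c * fracMax p n μ α f x = ⨆ γ : ℤ, μ (pBall p n γ x) ^ (α / n - 1) *
      (c * ∫⁻ y in pBall p n γ x, ENNReal.ofReal |f y| ∂μ) := by
  simp_rw [fracMax, ENNReal.mul_iSup, mul_left_comm]

lemma ofReal_abs_mul_fracMax_le (hb : AEMeasurable b μ) (hf : AEMeasurable f μ)
    (x : Fin n → ℚ_[p]) :
    ENNReal.ofReal |b x| * fracMax p n μ α f x ≤
      fracMax p n μ α (fun y => b y * f y) x + maxComm p n μ α b f x := by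
  rw [mul_fracMax]
  exact iSup_mul_le_iSup_mul_add _ _ _ _ fun γ =>
    ofReal_abs_mul_lintegral_le hb.restrict hf.restrict (b x)

lemma fracMax_mul_le (hf : AEMeasurable f μ) (x : Fin n → ℚ_[p]) :
    fracMax p n μ α (fun y => b y * f y) x ≤
      ENNReal.ofReal |b x| * fracMax p n μ α f x + maxComm p n μ α b f x := by
  rw [mul_fracMax]
  exact iSup_mul_le_iSup_mul_add _ _ _ _ fun γ => lintegral_ofReal_abs_mul_le hf.restrict (b x)

end fracMax

theorem nonlinComm_le_maxComm_add_general (p : ℕ) [Fact p.Prime] (n : ℕ)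
    [MeasurableSpace (Fin n → ℚ_[p])]
    (μ : Measure (Fin n → ℚ_[p]))
    (α : ℝ)
    (b f : (Fin n → ℚ_[p]) → ℝ)
    (hbloc : LocallyIntegrable b μ) (hfloc : LocallyIntegrable f μ)
    (x : Fin n → ℚ_[p]) (hx : fracMax p n μ α f x < ⊤) :
    ENNReal.ofReal |nonlinComm p n μ α b f x| ≤
      maxComm p n μ α b f x +
        ENNReal.ofReal (2 * max (-(b x)) 0) * fracMax p n μ α f x := by
  have hb := hbloc.aestronglyMeasurable.aemeasurable
  have hf := hfloc.aestronglyMeasurable.aemeasurable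
  exact ofReal_abs_mul_toReal_sub_le hx.ne (ofReal_abs_mul_fracMax_le hb hf x)
    (fracMax_mul_le hf x)

/-- For `0 ≤ α < n`, any locally integrable `b`, and any point where `M_α^p(f)(x) < ∞`,
`|[b, M_α^p](f)(x)| ≤ M_{α,b}^p(f)(x) + 2 b⁻(x) M_α^p(f)(x)`. -/
theorem nonlinComm_le_maxComm_add (p : ℕ) [Fact p.Prime] (n : ℕ)
    [MeasurableSpace (Fin n → ℚ_[p])] [BorelSpace (Fin n → ℚ_[p])]
    (μ : Measure (Fin n → ℚ_[p])) [μ.IsAddHaarMeasure]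
    (hμ : μ (Metric.closedBall 0 1) = 1)
    (α : ℝ) (hα₀ : 0 ≤ α) (hαn : α < n)
    (b f : (Fin n → ℚ_[p]) → ℝ)
    (hbloc : LocallyIntegrable b μ) (hfloc : LocallyIntegrable f μ)
    (x : Fin n → ℚ_[p]) (hx : fracMax p n μ α f x < ⊤) :
    ENNReal.ofReal |nonlinComm p n μ α b f x| ≤
      maxComm p n μ α b f x +
        ENNReal.ofReal (2 * max (-(b x)) 0) * fracMax p n μ α f x :=
  nonlinComm_le_maxComm_add_general p n μ α b f hbloc hfloc x hx
end

section
/- Let 0 < α < n, 1 < r < n/α, 1/q = 1/r − α/n, and b locally integrable on ℚ_p^n. If [b, M_α^p] is bounded from L^r(ℚ_p^n) to L^q(ℚ_p^n), then sup over all p-adic balls B of (1/|B|_h) ∫_B |b(y) − |B|_h^{−α/n} M_{α,B}^p(b)(y)|^q dy is finite. -/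
open MeasureTheory ENNReal

/-! Test the commutator on `f = χ_B`. Two `p`-adic balls are either disjoint or nested, so for
`y ∈ B` every ball `B_γ(y)` either lies in `B` or contains it; as `α/n − 1 ≤ 0`, the supremum
defining `M_α(b χ_B)(y)` is attained on balls inside `B`, giving `M_α(b χ_B) = M_{α,B}(b)` and
`M_α(χ_B) = |B|^{α/n}` on `B`. Hence `b − |B|^{−α/n} M_{α,B}(b) = |B|^{−α/n} [b, M_α](χ_B)` on
`B`, whose `L^q(B)` norm is at most `|B|^{−α/n} C |B|^{1/r} = C |B|^{1/q}`. -/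

namespace ENNReal

lemma rpow_le_rpow_of_nonpos {x y : ℝ≥0∞} (hxy : x ≤ y) {z : ℝ} (hz : z ≤ 0) :
    y ^ z ≤ x ^ z := by
  rw [← neg_neg z, rpow_neg y, rpow_neg x]
  exact ENNReal.inv_le_inv.mpr (rpow_le_rpow hxy (neg_nonneg.mpr hz))

lemma rpow_sub_one_mul_self {x : ℝ≥0∞} (h0 : x ≠ 0) (htop : x ≠ ⊤) (s : ℝ) :
    x ^ (s - 1) * x = x ^ s := by
  calc x ^ (s - 1) * x = x ^ (s - 1) * x ^ (1 : ℝ) := by rw [rpow_one]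
    _ = x ^ s := by rw [← rpow_add _ _ h0 htop, sub_add_cancel]

end ENNReal

lemma inv_mul_setLIntegral_rpow_le {X : Type*} [MeasurableSpace X] {μ : Measure X} {s : Set X}
    (hs0 : μ s ≠ 0) (hs : μ s ≠ ⊤) {q : ℝ} (hq : 0 < q) {g : X → ℝ} {C : ℝ≥0∞}
    (h : eLpNorm g (ENNReal.ofReal q) (μ.restrict s) ≤ C * μ s ^ (1 / q)) :
    (μ s)⁻¹ * ∫⁻ y in s, ENNReal.ofReal |g y| ^ q ∂μ ≤ C ^ q := by
  have hint : ∫⁻ y in s, ENNReal.ofReal |g y| ^ q ∂μ =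
      eLpNorm g (ENNReal.ofReal q) (μ.restrict s) ^ q := by
    simp_rw [← Real.enorm_eq_ofReal_abs]
    rw [lintegral_rpow_enorm_eq_rpow_eLpNorm' hq,
      eLpNorm_eq_eLpNorm' (by simpa using hq) ofReal_ne_top, toReal_ofReal hq.le]
  calc (μ s)⁻¹ * ∫⁻ y in s, ENNReal.ofReal |g y| ^ q ∂μ
      ≤ (μ s)⁻¹ * (C * μ s ^ (1 / q)) ^ q := by rw [hint]; gcongr
    _ = C ^ q := by
      rw [mul_rpow_of_nonneg _ _ hq.le, ← rpow_mul, one_div_mul_cancel hq.ne', rpow_one,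
        mul_left_comm, ENNReal.inv_mul_cancel hs0 hs, mul_one]

section Ball

variable {p : ℕ} [Fact p.Prime] {n : ℕ}

lemma pBall_subset_pBall {γ γ' : ℤ} (h : γ ≤ γ') (x : Fin n → ℚ_[p]) :
    pBall p n γ x ⊆ pBall p n γ' x :=
  Metric.closedBall_subset_closedBall <|
    zpow_le_zpow_right₀ (by exact_mod_cast (Fact.out : p.Prime).one_lt.le) h

lemma pBall_eq_of_mem {γ : ℤ} {x y : Fin n → ℚ_[p]} (h : y ∈ pBall p n γ x) :
    pBall p n γ y = pBall p n γ x :=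
  (IsUltrametricDist.closedBall_eq_of_mem h).symm

lemma pBall_subset_of_mem_of_le {γ γ₀ : ℤ} {x y : Fin n → ℚ_[p]}
    (hy : y ∈ pBall p n γ₀ x) (h : γ ≤ γ₀) : pBall p n γ y ⊆ pBall p n γ₀ x :=
  pBall_eq_of_mem hy ▸ pBall_subset_pBall h y

lemma pBall_subset_of_mem_of_ge {γ γ₀ : ℤ} {x y : Fin n → ℚ_[p]}
    (hy : y ∈ pBall p n γ₀ x) (h : γ₀ ≤ γ) : pBall p n γ₀ x ⊆ pBall p n γ y :=
  pBall_eq_of_mem hy ▸ pBall_subset_pBall h y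

lemma measurableSet_pBall [MeasurableSpace (Fin n → ℚ_[p])]
    [OpensMeasurableSpace (Fin n → ℚ_[p])] (γ : ℤ) (x : Fin n → ℚ_[p]) :
    MeasurableSet (pBall p n γ x) :=
  Metric.isClosed_closedBall.measurableSet

variable [MeasurableSpace (Fin n → ℚ_[p])] (μ : Measure (Fin n → ℚ_[p]))

lemma measure_pBall_ne_zero [μ.IsOpenPosMeasure] (γ : ℤ) (x : Fin n → ℚ_[p]) :
    μ (pBall p n γ x) ≠ 0 :=
  (Metric.measure_closedBall_pos μ x (zpow_pos (mod_cast (Fact.out : p.Prime).pos) γ)).ne'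

lemma measure_pBall_ne_top [IsFiniteMeasureOnCompacts μ] (γ : ℤ) (x : Fin n → ℚ_[p]) :
    μ (pBall p n γ x) ≠ ⊤ :=
  (isCompact_closedBall x _).measure_lt_top.ne

end Ball

section FracMax

variable {p : ℕ} [Fact p.Prime] {n : ℕ} [MeasurableSpace (Fin n → ℚ_[p])]
  (μ : Measure (Fin n → ℚ_[p])) {α : ℝ} {γ₀ : ℤ} {x y : Fin n → ℚ_[p]}

lemma localFracMax_one [μ.IsOpenPosMeasure] [IsFiniteMeasureOnCompacts μ]
    (hα : 0 ≤ α) (hy : y ∈ pBall p n γ₀ x) :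
    localFracMax p n μ α γ₀ x (fun _ => 1) y = μ (pBall p n γ₀ x) ^ (α / n) := by
  simp only [localFracMax, abs_one, ENNReal.ofReal_one, setLIntegral_one,
    ENNReal.rpow_sub_one_mul_self (measure_pBall_ne_zero μ _ _) (measure_pBall_ne_top μ _ _)]
  exact le_antisymm (iSup₂_le fun γ hsub => rpow_le_rpow (measure_mono hsub) (by positivity))
    (le_iSup₂_of_le γ₀ (pBall_eq_of_mem hy).le (by rw [pBall_eq_of_mem hy]))

variable [OpensMeasurableSpace (Fin n → ℚ_[p])]

lemma setLIntegral_mul_indicator_pBall (b : (Fin n → ℚ_[p]) → ℝ) (γ : ℤ) :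
    ∫⁻ z in pBall p n γ y,
        ENNReal.ofReal |b z * (pBall p n γ₀ x).indicator (fun _ => (1 : ℝ)) z| ∂μ =
      ∫⁻ z in pBall p n γ₀ x ∩ pBall p n γ y, ENNReal.ofReal |b z| ∂μ := by
  have h : ∀ z, ENNReal.ofReal |b z * (pBall p n γ₀ x).indicator (fun _ => (1 : ℝ)) z| =
      (pBall p n γ₀ x).indicator (fun w => ENNReal.ofReal |b w|) z := by
    intro z
    by_cases hz : z ∈ pBall p n γ₀ x <;> simp [hz]
  simp_rw [h]
  rw [setLIntegral_indicator (measurableSet_pBall γ₀ x)]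

lemma fracMax_mul_indicator_pBall (hαn : α ≤ n) (b : (Fin n → ℚ_[p]) → ℝ)
    (hy : y ∈ pBall p n γ₀ x) :
    fracMax p n μ α (fun z => b z * (pBall p n γ₀ x).indicator (fun _ => 1) z) y =
      localFracMax p n μ α γ₀ x b y := by
  have hs : α / n - 1 ≤ 0 := sub_nonpos.2 (div_le_one_of_le₀ hαn n.cast_nonneg)
  simp_rw [fracMax, setLIntegral_mul_indicator_pBall]
  refine le_antisymm (iSup_le fun γ => ?_) (iSup₂_le fun γ hsub => ?_)
  · rcases le_total γ γ₀ with hγ | hγ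
    · have hsub := pBall_subset_of_mem_of_le hy hγ
      rw [Set.inter_eq_self_of_subset_right hsub]
      exact le_iSup₂_of_le γ hsub le_rfl
    · -- as `α/n − 1 ≤ 0`, shrinking `B_γ(y) ⊇ B` to `B = B_{γ₀}(y)` only increases the average
      have hsup := pBall_subset_of_mem_of_ge hy hγ
      rw [Set.inter_eq_self_of_subset_left hsup]
      refine le_iSup₂_of_le γ₀ (pBall_eq_of_mem hy).le ?_
      rw [pBall_eq_of_mem hy]
      exact mul_le_mul_left (ENNReal.rpow_le_rpow_of_nonpos (measure_mono hsup) hs) _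
  · refine le_iSup_of_le γ ?_
    rw [Set.inter_eq_self_of_subset_right hsub]

variable [μ.IsOpenPosMeasure] [IsFiniteMeasureOnCompacts μ]

lemma fracMax_indicator_pBall (hα₀ : 0 ≤ α) (hαn : α ≤ n) (hy : y ∈ pBall p n γ₀ x) :
    fracMax p n μ α ((pBall p n γ₀ x).indicator fun _ => 1) y =
      μ (pBall p n γ₀ x) ^ (α / n) := by
  simpa [localFracMax_one μ hα₀ hy] using fracMax_mul_indicator_pBall μ hαn (fun _ => 1) hy

lemma sub_localFracMax_eq_nonlinComm (hα₀ : 0 ≤ α) (hαn : α ≤ n) (b : (Fin n → ℚ_[p]) → ℝ)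
    (hy : y ∈ pBall p n γ₀ x) :
    b y - (μ (pBall p n γ₀ x) ^ (-(α / n)) * localFracMax p n μ α γ₀ x b y).toReal =
      (μ (pBall p n γ₀ x) ^ (-(α / n))).toReal *
        nonlinComm p n μ α b ((pBall p n γ₀ x).indicator fun _ => 1) y := by
  have hc : (μ (pBall p n γ₀ x) ^ (α / n)).toReal ≠ 0 :=
    (toReal_pos (by simp [measure_pBall_ne_zero μ, measure_pBall_ne_top μ])
      (rpow_ne_top_of_nonneg (by positivity) (measure_pBall_ne_top μ _ _))).ne'
  rw [nonlinComm, fracMax_indicator_pBall μ hα₀ hαn hy, fracMax_mul_indicator_pBall μ hαn b hy,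
    rpow_neg, toReal_mul, toReal_inv]
  field_simp

lemma eLpNorm_restrict_sub_localFracMax_le (hα₀ : 0 ≤ α) (hαn : α ≤ n)
    (b : (Fin n → ℚ_[p]) → ℝ) (q : ℝ≥0∞) :
    eLpNorm (fun y => b y - (μ (pBall p n γ₀ x) ^ (-(α / n)) *
        localFracMax p n μ α γ₀ x b y).toReal) q (μ.restrict (pBall p n γ₀ x)) ≤
      μ (pBall p n γ₀ x) ^ (-(α / n)) *
        eLpNorm (nonlinComm p n μ α b ((pBall p n γ₀ x).indicator fun _ => 1)) q μ := by
  have hae : (fun y => b y - (μ (pBall p n γ₀ x) ^ (-(α / n)) *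
        localFracMax p n μ α γ₀ x b y).toReal) =ᵐ[μ.restrict (pBall p n γ₀ x)]
      (μ (pBall p n γ₀ x) ^ (-(α / n))).toReal •
        nonlinComm p n μ α b ((pBall p n γ₀ x).indicator fun _ => 1) :=
    (ae_restrict_mem (measurableSet_pBall γ₀ x)).mono fun y hy =>
      sub_localFracMax_eq_nonlinComm μ hα₀ hαn b hy
  rw [eLpNorm_congr_ae hae, eLpNorm_const_smul, Real.enorm_of_nonneg toReal_nonneg,
    ofReal_toReal (rpow_ne_top_of_ne_zero (measure_pBall_ne_zero μ _ _)
      (measure_pBall_ne_top μ _ _))]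
  gcongr
  exact Measure.restrict_le_self

end FracMax

theorem nonlinComm_bounded_implies_localFracMax_bound_general (p : ℕ) [Fact p.Prime] (n : ℕ)
    [MeasurableSpace (Fin n → ℚ_[p])] [BorelSpace (Fin n → ℚ_[p])]
    (μ : Measure (Fin n → ℚ_[p])) [μ.IsAddHaarMeasure]
    (α : ℝ) (hα₀ : 0 < α) (hαn : α < n)
    (b : (Fin n → ℚ_[p]) → ℝ)
    (r q : ℝ) (hr : 1 < r) (hrn : r < n / α) (hq : 1 / q = 1 / r - α / n)
    (hbound : ∃ C : ENNReal, C ≠ ⊤ ∧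
      ∀ f : (Fin n → ℚ_[p]) → ℝ, MemLp f (ENNReal.ofReal r) μ →
        eLpNorm (nonlinComm p n μ α b f) (ENNReal.ofReal q) μ ≤
          C * eLpNorm f (ENNReal.ofReal r) μ) :
    ∃ C : ENNReal, C ≠ ⊤ ∧
      ∀ (γ : ℤ) (x : Fin n → ℚ_[p]),
        (μ (pBall p n γ x))⁻¹ *
            ∫⁻ y in pBall p n γ x,
              ENNReal.ofReal
                |b y - (μ (pBall p n γ x) ^ (-(α / n)) *
                    localFracMax p n μ α γ x b y).toReal| ^ q ∂μ ≤ C := by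
  obtain ⟨C, hC, hCb⟩ := hbound
  have hr0 : 0 < r := one_pos.trans hr
  have hq0 : 0 < q := by
    have hαr : α / n < 1 / r := by
      rw [div_lt_div_iff₀ (hα₀.trans hαn) hr0]
      linarith [(lt_div_iff₀ hα₀).1 hrn]
    exact one_div_pos.1 (hq ▸ sub_pos.2 hαr)
  refine ⟨C ^ q, rpow_ne_top_of_nonneg hq0.le hC, fun γ x => ?_⟩
  have hB0 := measure_pBall_ne_zero μ γ x
  have hBtop := measure_pBall_ne_top μ γ x
  have hχ : eLpNorm (nonlinComm p n μ α b ((pBall p n γ x).indicator fun _ => 1))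
      (ENNReal.ofReal q) μ ≤ C * μ (pBall p n γ x) ^ (1 / r) := by
    have h := hCb _ (memLp_indicator_const _ (measurableSet_pBall γ x) 1 (Or.inr hBtop))
    rwa [eLpNorm_indicator_const (measurableSet_pBall γ x) (by simpa using hr0) ofReal_ne_top,
      toReal_ofReal hr0.le, enorm_one, one_mul] at h
  refine inv_mul_setLIntegral_rpow_le hB0 hBtop hq0 ?_
  calc _ ≤ μ (pBall p n γ x) ^ (-(α / n)) * (C * μ (pBall p n γ x) ^ (1 / r)) :=
        (eLpNorm_restrict_sub_localFracMax_le μ hα₀.le hαn.le b _).trans (by gcongr)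
    _ = C * μ (pBall p n γ x) ^ (1 / q) := by
      rw [mul_left_comm, ← rpow_add _ _ hB0 hBtop, hq, neg_add_eq_sub]

/-- If `0 < α < n`, `1 < r < n/α`, `1/q = 1/r − α/n`, and the nonlinear commutator
`[b, M_α^p]` is bounded from `L^r(ℚ_p^n)` to `L^q(ℚ_p^n)`, then
`sup_B |B|⁻¹ ∫_B |b(y) − |B|^{−α/n} M_{α,B}^p(b)(y)|^q dy < ∞`. -/
theorem nonlinComm_bounded_implies_localFracMax_bound (p : ℕ) [Fact p.Prime] (n : ℕ)
    [MeasurableSpace (Fin n → ℚ_[p])] [BorelSpace (Fin n → ℚ_[p])]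
    (μ : Measure (Fin n → ℚ_[p])) [μ.IsAddHaarMeasure]
    (hμ : μ (Metric.closedBall 0 1) = 1)
    (α : ℝ) (hα₀ : 0 < α) (hαn : α < n)
    (b : (Fin n → ℚ_[p]) → ℝ) (hbloc : LocallyIntegrable b μ)
    (r q : ℝ) (hr : 1 < r) (hrn : r < n / α) (hq : 1 / q = 1 / r - α / n)
    (hbound : ∃ C : ENNReal, C ≠ ⊤ ∧
      ∀ f : (Fin n → ℚ_[p]) → ℝ, MemLp f (ENNReal.ofReal r) μ →
        eLpNorm (nonlinComm p n μ α b f) (ENNReal.ofReal q) μ ≤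
          C * eLpNorm f (ENNReal.ofReal r) μ) :
    ∃ C : ENNReal, C ≠ ⊤ ∧
      ∀ (γ : ℤ) (x : Fin n → ℚ_[p]),
        (μ (pBall p n γ x))⁻¹ *
            ∫⁻ y in pBall p n γ x,
              ENNReal.ofReal
                |b y - (μ (pBall p n γ x) ^ (-(α / n)) *
                    localFracMax p n μ α γ x b y).toReal| ^ q ∂μ ≤ C :=
  nonlinComm_bounded_implies_localFracMax_bound_general p n μ α hα₀ hαn b r q hr hrn hq hbound
end
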